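/- Let w ∈ S_n and let (i,j) ∈ [n]² with j ≠ w(i). Then there exists u ≤ w in Bruhat order with u(i) = j if and only if (i,j) is sandwiched by an inversion of w, i.e., there exist k < l with w(k) > w(l), k ≤ i ≤ l, and w(l) ≤ j ≤ w(k). -/

import Mathlib

open Equiv Finset
open scoped Classical

/-- Bruhat order on the symmetric group on `Fin n`, via the rank-matrix
characterization: `v ≤ w` iff every northeast corner count of `v` is at most
that of `w`. -/
def bruhatLE {n : ℕ} (v w : Equiv.Perm (Fin n)) : Prop :=
  ∀ i j : Fin n,
    (Finset.univ.filter fun k => k ≤ i ∧ j ≤ v k).card ≤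
      (Finset.univ.filter fun k => k ≤ i ∧ j ≤ w k).card

/-- Coxeter length = number of inversions. -/
def len {n : ℕ} (v : Equiv.Perm (Fin n)) : ℕ :=
  (Finset.univ.filter fun p : Fin n × Fin n => p.1 < p.2 ∧ v p.2 < v p.1).card

/-- The graph of the Bruhat interval `[v, w]`. -/
def grInt {n : ℕ} (v w : Equiv.Perm (Fin n)) : Set (Fin n × Fin n) :=
  {p | ∃ u : Equiv.Perm (Fin n), bruhatLE v u ∧ bruhatLE u w ∧ u p.1 = p.2}
/-!
If `u ≤ w` and `u i = j`, the point `(i, j)` of `u` is counted in the northeast quadrant of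
`u` at `(i, j)`, so `w` has a point `(k, w k)` weakly northeast of it. Complementary counting
shows that Bruhat order also compares southwest quadrant counts, which gives a point
`(l, w l)` of `w` weakly southwest of `(i, j)`. The two points are distinct because
`j ≠ w i`, hence they form an inversion sandwiching `(i, j)`.

Conversely, put `m = w⁻¹ j`. If `i, m` form an inversion of `w`, one transposition moves
`j` to position `i`. Otherwise the sandwiching inversion supplies a third position which
forms a `312` or `231` pattern with `i` and `m`, and two transpositions, each undoing an
inversion, do the job.
-/

namespace Equiv

lemma swap_apply_le_iff {α : Type*} [Preorder α] [DecidableEq α] {a b i : α} (ha : a ≤ i)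
    (hb : b ≤ i) (k : α) : swap a b k ≤ i ↔ k ≤ i := by
  rcases eq_or_ne k a with rfl | hka
  · simp [ha, hb]
  rcases eq_or_ne k b with rfl | hkb
  · simp [ha, hb]
  rw [swap_apply_of_ne_of_ne hka hkb]

namespace Perm

variable {n : ℕ}

lemma card_filter_apply_le (v : Perm (Fin n)) (j : Fin n) : #{k | v k ≤ j} = j + 1 :=
  (card_equiv v (by simp)).trans (Fin.card_Iic j)

lemma card_filter_ge_le_add (v : Perm (Fin n)) (i j : Fin n) :
    #{k | i ≤ k ∧ v k ≤ j} + i = #{k | k < i ∧ j < v k} + (j + 1) := by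
  have hle : #{k | i ≤ k ∧ v k ≤ j} + #{k | k < i ∧ v k ≤ j} = j + 1 := by
    rw [← v.card_filter_apply_le j,
      ← card_filter_add_card_filter_not (s := {k | v k ≤ j}) (fun k => i ≤ k)]
    simp only [filter_filter, not_le, and_comm]
  have hlt : #{k | k < i ∧ v k ≤ j} + #{k | k < i ∧ j < v k} = i := by
    rw [← Fin.card_Iio i, ← card_filter_add_card_filter_not (s := Iio i) (fun k => v k ≤ j)]
    simp only [not_le]
    congr 2 <;> ext k <;> simp
  omega

end Perm

end Equiv

section

variable {n : ℕ} {u v w : Perm (Fin n)}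

lemma bruhatLE_refl (w : Perm (Fin n)) : bruhatLE w w := fun _ _ => le_rfl

lemma bruhatLE.trans (huv : bruhatLE u v) (hvw : bruhatLE v w) : bruhatLE u w :=
  fun i j => (huv i j).trans (hvw i j)

lemma bruhatLE_mul_swap {a b : Fin n} (hab : a < b) (hw : w b < w a) :
    bruhatLE (w * swap a b) w := by
  intro i j
  by_cases hbi : b ≤ i
  · refine (card_equiv (swap a b) fun k => ?_).le
    rw [mem_filter, mem_filter, Perm.mul_apply, swap_apply_le_iff (hab.le.trans hbi) hbi]
    simp
  -- Among the positions `k ≤ i < b` only `a` changes its value, from `w a` down to `w b`.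
  · refine card_le_card fun k => ?_
    simp only [mem_filter, mem_univ, true_and]
    rintro ⟨hki, hjk⟩
    refine ⟨hki, ?_⟩
    have hkb : k ≠ b := by rintro rfl; exact hbi hki
    rcases eq_or_ne k a with rfl | hka
    · rw [Perm.mul_apply, swap_apply_left] at hjk
      exact hjk.trans hw.le
    · rwa [Perm.mul_apply, swap_apply_of_ne_of_ne hka hkb] at hjk

lemma bruhatLE.card_filter_lt_gt_le (h : bruhatLE u w) (i j : Fin n) :
    #{k | k < i ∧ j < u k} ≤ #{k | k < i ∧ j < w k} := by
  rcases eq_empty_or_nonempty ({k | k < i ∧ j < u k} : Finset (Fin n)) with h0 | ⟨k, hk⟩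
  · simp [h0]
  simp only [mem_filter, mem_univ, true_and, Fin.lt_def] at hk
  -- A point of `u` in the open quadrant forces `0 < i` and `j + 1 < n`, so the open quadrant
  -- at `(i, j)` is the closed one at `(i - 1, j + 1)`.
  have hclosed : ∀ v : Perm (Fin n), #{k | k < i ∧ j < v k} =
      #{k | k ≤ (⟨i - 1, by omega⟩ : Fin n) ∧ (⟨j + 1, by omega⟩ : Fin n) ≤ v k} := by
    intro v
    congr 1
    ext k
    simp only [mem_filter, mem_univ, true_and, Fin.lt_def, Fin.le_def]
    omega
  rw [hclosed, hclosed]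
  exact h _ _

lemma bruhatLE.card_filter_ge_le_le (h : bruhatLE u w) (i j : Fin n) :
    #{k | i ≤ k ∧ u k ≤ j} ≤ #{k | i ≤ k ∧ w k ≤ j} := by
  have hu := u.card_filter_ge_le_add i j
  have hw := w.card_filter_ge_le_add i j
  have := h.card_filter_lt_gt_le i j
  omega

lemma bruhatLE.exists_le_apply_ge (h : bruhatLE u w) (i : Fin n) : ∃ k ≤ i, u i ≤ w k := by
  obtain ⟨k, hk⟩ := card_pos.1 <| (card_pos.2 ⟨i, by simp⟩).trans_le (h i (u i))
  exact ⟨k, by simpa using hk⟩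

lemma bruhatLE.exists_ge_apply_le (h : bruhatLE u w) (i : Fin n) : ∃ l ≥ i, w l ≤ u i := by
  obtain ⟨l, hl⟩ :=
    card_pos.1 <| (card_pos.2 ⟨i, by simp⟩).trans_le (h.card_filter_ge_le_le i (u i))
  exact ⟨l, by simpa using hl⟩

lemma exists_bruhatLE_apply_eq_of_pattern312 {a b c : Fin n} (hab : a < b) (hbc : b < c)
    (hbc' : w b < w c) (hca : w c < w a) : ∃ u, bruhatLE u w ∧ u b = w c := by
  have hca' : (w * swap a b) c < (w * swap a b) b := by
    simpa [swap_apply_of_ne_of_ne (hab.trans hbc).ne' hbc.ne'] using hca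
  refine ⟨w * swap a b * swap b c,
    (bruhatLE_mul_swap hbc hca').trans (bruhatLE_mul_swap hab (hbc'.trans hca)), ?_⟩
  simp [swap_apply_of_ne_of_ne (hab.trans hbc).ne' hbc.ne']

lemma exists_bruhatLE_apply_eq_of_pattern231 {a b c : Fin n} (hab : a < b) (hbc : b < c)
    (hca : w c < w a) (hab' : w a < w b) : ∃ u, bruhatLE u w ∧ u b = w a := by
  have hab'' : (w * swap b c) b < (w * swap b c) a := by
    simpa [swap_apply_of_ne_of_ne hab.ne (hab.trans hbc).ne] using hca
  refine ⟨w * swap b c * swap a b,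
    (bruhatLE_mul_swap hab hab'').trans (bruhatLE_mul_swap hbc (hca.trans hab')), ?_⟩
  simp [swap_apply_of_ne_of_ne hab.ne (hab.trans hbc).ne]

lemma exists_bruhatLE_apply_eq_of_sandwiched {i j k l : Fin n} (hki : k ≤ i) (hil : i ≤ l)
    (hlj : w l ≤ j) (hjk : j ≤ w k) : ∃ u, bruhatLE u w ∧ u i = j := by
  obtain ⟨m, rfl⟩ := w.surjective j
  rcases lt_trichotomy i m with him | rfl | hmi
  · rcases lt_or_gt_of_ne (w.injective.ne him.ne) with hwi | hwi
    · have hmk : w m < w k := hjk.lt_of_ne (w.injective.ne (hki.trans_lt him).ne')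
      have hki' : k < i := hki.lt_of_ne (by rintro rfl; exact hwi.not_gt hmk)
      exact exists_bruhatLE_apply_eq_of_pattern312 hki' him hwi hmk
    · exact ⟨w * swap i m, bruhatLE_mul_swap him hwi, by simp⟩
  · exact ⟨w, bruhatLE_refl w, rfl⟩
  · rcases lt_or_gt_of_ne (w.injective.ne hmi.ne) with hwm | hwm
    · have hlm : w l < w m := hlj.lt_of_ne (w.injective.ne (hmi.trans_le hil).ne')
      have hil' : i < l := hil.lt_of_ne (by rintro rfl; exact hwm.not_gt hlm)
      exact exists_bruhatLE_apply_eq_of_pattern231 hmi hil' hlm hwm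
    · exact ⟨w * swap m i, bruhatLE_mul_swap hmi hwm, by simp⟩

end

/-- Characterization of the graph of the lower Bruhat interval `[e, w]`:
a point `(i, j)` with `j ≠ w i` admits `u ≤ w` with `u i = j` iff it is
sandwiched by an inversion of `w`. -/
theorem exists_le_iff_sandwiched_by_inversion {n : ℕ} (w : Equiv.Perm (Fin n))
    (i j : Fin n) (hij : j ≠ w i) :
    (∃ u : Equiv.Perm (Fin n), bruhatLE u w ∧ u i = j) ↔
      ∃ k l : Fin n, k < l ∧ w l < w k ∧ k ≤ i ∧ i ≤ l ∧ w l ≤ j ∧ j ≤ w k := by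
  constructor
  · rintro ⟨u, hu, rfl⟩
    obtain ⟨k, hki, hk⟩ := hu.exists_le_apply_ge i
    obtain ⟨l, hil, hl⟩ := hu.exists_ge_apply_le i
    have hkl : k ≠ l := by
      rintro rfl
      obtain rfl := le_antisymm hki hil
      exact hij (le_antisymm hk hl)
    exact ⟨k, l, (hki.trans hil).lt_of_ne hkl, (hl.trans hk).lt_of_ne (w.injective.ne hkl.symm),
      hki, hil, hl, hk⟩
  · rintro ⟨k, l, -, -, hki, hil, hlj, hjk⟩
    exact exists_bruhatLE_apply_eq_of_sandwiched hki hil hlj hjk
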